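/- The following are equivalent: (1) C is mp; (2) p ⊔ q = ⊤ for all distinct minimal primes p,q of C; (3) for every minimal prime p of C, the set V(p) := {q ∈ Spec(C) | p ≤ q} is closed in the flat topology on Spec(C). -/

import Mathlib

open CompleteLattice

/-- A complete lattice equipped with a commutator operation, axiomatizing the congruence
lattice of an algebra in a semidegenerate congruence-modular variety whose compact
congruences are closed under the commutator. -/
class CommutatorLattice (C : Type*) [CompleteLattice C] where
  comm : C → C → C
  comm_comm : ∀ a b : C, comm a b = comm b a
  comm_sSup : ∀ (s : Set C) (b : C), comm (sSup s) b = ⨆ a ∈ s, comm a b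
  comm_le_inf : ∀ a b : C, comm a b ≤ a ⊓ b
  comm_top : ∀ a : C, comm a ⊤ = a
  compactlyGenerated : ∀ x : C,
    ∃ s : Set C, (∀ a ∈ s, IsCompactElement a) ∧ sSup s = x
  top_isCompact : IsCompactElement (⊤ : C)
  comm_isCompact : ∀ a b : C, IsCompactElement a → IsCompactElement b →
    IsCompactElement (comm a b)

namespace CommutatorLattice

variable {C : Type*} [CompleteLattice C] [CommutatorLattice C]

/-- The residuation `a → b := ⨆ {c | [a,c] ≤ b}`. -/
def resid (a b : C) : C := sSup {c : C | comm a c ≤ b}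

/-- The annihilator `a⊥ := a → ⊥`. -/
def ann (a : C) : C := resid a ⊥

/-- Iterated commutator: `cpow a n = [a,a]^n`, with the convention `[a,a]^0 = a`.
Note that `[a,b]^n` for `n ≥ 1` equals `cpow (comm a b) (n-1)`. -/
def cpow (a : C) : ℕ → C
  | 0 => a
  | n + 1 => comm (cpow a n) (cpow a n)

/-- Prime elements: `p ≠ ⊤` and `[a,b] ≤ p` implies `a ≤ p` or `b ≤ p`. -/
def IsPrime (p : C) : Prop := p ≠ ⊤ ∧ ∀ a b : C, comm a b ≤ p → a ≤ p ∨ b ≤ p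

/-- The radical `ρ(a) := ⨅ {p prime | a ≤ p}`. -/
def radical (a : C) : C := sInf {p : C | IsPrime p ∧ a ≤ p}

variable (C) in
/-- `C` is semiprime if `ρ(⊥) = ⊥`. -/
def Semiprime : Prop := radical (⊥ : C) = ⊥

variable (C) in
/-- Condition (⋆): for all compact `a`, `b` and all `n ≥ 1` there is `m ≥ 0` with
`[[a,a]^m, [b,b]^m] ≤ [a,b]^n`.  Here `cpow (comm a b) n = [a,b]^(n+1)`, so `n : ℕ`
ranges exactly over the exponents `≥ 1` of the paper. -/
def Star : Prop := ∀ a b : C, IsCompactElement a → IsCompactElement b →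
  ∀ n : ℕ, ∃ m : ℕ, comm (cpow a m) (cpow b m) ≤ cpow (comm a b) n

/-- Pure elements: `t ⊔ a⊥ = ⊤` for every compact `a ≤ t`. -/
def IsPure (t : C) : Prop := ∀ a : C, IsCompactElement a → a ≤ t → t ⊔ ann a = ⊤

/-- w-pure elements: `t ⊔ (a → ρ(⊥)) = ⊤` for every compact `a ≤ t`. -/
def IsWPure (t : C) : Prop :=
  ∀ a : C, IsCompactElement a → a ≤ t → t ⊔ resid a (radical ⊥) = ⊤

/-- Complemented elements. -/
def IsComplEl (a : C) : Prop := ∃ b : C, a ⊔ b = ⊤ ∧ a ⊓ b = ⊥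

/-- Regular elements: joins of sets of complemented elements. -/
def IsRegular (t : C) : Prop := ∃ S : Set C, (∀ a ∈ S, IsComplEl a) ∧ t = sSup S

/-- Max-regular elements: maximal among regular elements distinct from `⊤`. -/
def IsMaxRegular (t : C) : Prop :=
  IsRegular t ∧ t ≠ ⊤ ∧ ∀ u : C, IsRegular u → u ≠ ⊤ → t ≤ u → u = t

/-- Maximal elements of `C \ {⊤}`. -/
def IsMaximal (p : C) : Prop := p ≠ ⊤ ∧ ∀ q : C, q ≠ ⊤ → p ≤ q → q = p

/-- Minimal primes. -/
def IsMinPrime (p : C) : Prop := IsPrime p ∧ ∀ q : C, IsPrime q → q ≤ p → q = p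

variable (C) in
/-- `C` is mp if every prime lies above a unique minimal prime. -/
def MP : Prop := ∀ p : C, IsPrime p → ∃! q : C, IsMinPrime q ∧ q ≤ p

variable (C) in
/-- `C` is PF if `a⊥` is pure for every compact `a`. -/
def PF : Prop := ∀ a : C, IsCompactElement a → IsPure (ann a)

variable (C) in
/-- `C` is PP if `a⊥` is complemented for every compact `a`. -/
def PP : Prop := ∀ a : C, IsCompactElement a → IsComplEl (ann a)

/-- `O(p) := ⨆ {a compact | a⊥ ≰ p}`. -/
def O (p : C) : C := sSup {a : C | IsCompactElement a ∧ ¬ ann a ≤ p}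

variable (C) in
/-- `C` is normal. -/
def Normal : Prop := ∀ t u : C, t ⊔ u = ⊤ →
  ∃ a b : C, t ⊔ a = ⊤ ∧ u ⊔ b = ⊤ ∧ comm a b = ⊥

variable (C) in
/-- `C` is B-normal. -/
def BNormal : Prop := ∀ t u : C, t ⊔ u = ⊤ →
  ∃ a b : C, IsComplEl a ∧ IsComplEl b ∧ t ⊔ a = ⊤ ∧ u ⊔ b = ⊤ ∧ comm a b = ⊥

variable (C) in
/-- `C` is purified. -/
def Purified : Prop := ∀ p q : C, IsMinPrime p → IsMinPrime q → p ≠ q →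
  ∃ a : C, IsComplEl a ∧ a ≤ p ∧ ann a ≤ q

variable (C) in
/-- The prime spectrum of `C`. -/
abbrev Spec := {p : C // IsPrime p}

variable (C) in
/-- The Zariski topology on `Spec C`: the closed sets are the `V(t) = {p | t ≤ p}`,
equivalently the topology generated by the sets `D(t) = {p | t ≰ p}`. -/
def zariskiTop : TopologicalSpace (Spec C) :=
  TopologicalSpace.generateFrom {U : Set (Spec C) | ∃ t : C, U = {p : Spec C | ¬ t ≤ p.1}}

variable (C) in
/-- The flat topology on `Spec C`: generated by the open basis `V(a)`, `a` compact. -/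
def flatTop : TopologicalSpace (Spec C) :=
  TopologicalSpace.generateFrom
    {U : Set (Spec C) | ∃ a : C, IsCompactElement a ∧ U = {p : Spec C | a ≤ p.1}}

/-!
Every prime lies above a minimal prime (by Zorn: the infimum of a chain of primes is prime), and
since `⊤` is compact every element other than `⊤` lies below a coatom, which is prime. Hence two
minimal primes `p`, `q` lie below a common prime iff `p ⊔ q ≠ ⊤`, which gives (1) ⇔ (2).
The sets `V(a)`, `a` compact, form a basis of the flat topology, and `V(a)` misses `V(p)` iff
`a ⊔ p = ⊤`. So `V(p)` is closed iff every prime `q ∉ V(p)` contains a compact `a` with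
`p ⊔ a = ⊤`. Under (2) take a minimal prime `m ≤ q`: then `p ⊔ m = ⊤`, and compactness of `⊤`
shrinks `m` to a compact `a ≤ m` with `p ⊔ a = ⊤`.
-/

lemma _root_.CompleteLattice.isCompactElement_bot {α : Type*} [CompleteLattice α] :
    IsCompactElement (⊥ : α) := by
  simpa using isCompactElement_finsetSup (f := id) (∅ : Finset α) (by simp)

lemma _root_.CompleteLattice.IsCompactElement.sup {α : Type*} [CompleteLattice α] {a b : α}
    (ha : IsCompactElement a) (hb : IsCompactElement b) : IsCompactElement (a ⊔ b) := by
  classical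
  simpa using isCompactElement_finsetSup (f := id) {a, b} (by simp [ha, hb])

lemma comm_sup_left (a b c : C) : comm (a ⊔ b) c = comm a c ⊔ comm b c := by
  rw [← sSup_pair, comm_sSup, iSup_pair]

lemma _root_.IsCoatom.isPrime {m : C} (hm : IsCoatom m) : IsPrime m := by
  refine ⟨hm.ne_top, fun a b hab => ?_⟩
  by_contra! hcon
  have hma : m ⊔ a = ⊤ := codisjoint_iff.1 (hm.not_le_iff_codisjoint.1 hcon.1)
  have hmb : m ⊔ b = ⊤ := codisjoint_iff.1 (hm.not_le_iff_codisjoint.1 hcon.2)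
  refine hm.ne_top (top_le_iff.1 ?_)
  calc (⊤ : C) = comm (m ⊔ a) (m ⊔ b) := by rw [hma, hmb, comm_top]
    _ = comm m (m ⊔ b) ⊔ (comm m a ⊔ comm b a) := by
        rw [comm_sup_left, comm_comm a, comm_sup_left, comm_comm m a]
    _ ≤ m := by
        refine sup_le ((comm_le_inf _ _).trans inf_le_left)
          (sup_le ((comm_le_inf _ _).trans inf_le_left) ?_)
        rwa [comm_comm]

lemma exists_isPrime_ge {t : C} (ht : t ≠ ⊤) : ∃ p : C, IsPrime p ∧ t ≤ p := by
  have := coatomic_of_top_compact (top_isCompact (C := C))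
  obtain ⟨m, hm, htm⟩ := (eq_top_or_exists_le_coatom t).resolve_left ht
  exact ⟨m, hm.isPrime, htm⟩

lemma sup_eq_top_iff_forall_isPrime {a b : C} :
    a ⊔ b = ⊤ ↔ ∀ p : C, IsPrime p → a ≤ p → ¬ b ≤ p := by
  refine ⟨fun h p hp hap hbp => hp.1 (top_le_iff.1 (h ▸ sup_le hap hbp)), fun h => ?_⟩
  by_contra hne
  obtain ⟨p, hp, hle⟩ := exists_isPrime_ge hne
  exact h p hp (le_sup_left.trans hle) (le_sup_right.trans hle)

lemma isPrime_sInf_of_isChain {c : Set C} (hc : IsChain (· ≤ ·) c) (hne : c.Nonempty)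
    (hprime : ∀ p ∈ c, IsPrime p) : IsPrime (sInf c) := by
  obtain ⟨q, hq⟩ := hne
  refine ⟨fun h => (hprime q hq).1 (top_le_iff.1 (h ▸ sInf_le hq)), fun a b hab => ?_⟩
  by_cases ha : a ≤ sInf c
  · exact Or.inl ha
  obtain ⟨p₀, hp₀, hap₀⟩ : ∃ p₀ ∈ c, ¬ a ≤ p₀ := by simpa [le_sInf_iff] using ha
  have hbp₀ : b ≤ p₀ := ((hprime p₀ hp₀).2 a b (hab.trans (sInf_le hp₀))).resolve_left hap₀
  refine Or.inr (le_sInf fun p hp => ?_)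
  rcases hc.total hp hp₀ with hpp₀ | hp₀p
  · exact ((hprime p hp).2 a b (hab.trans (sInf_le hp))).resolve_left
      fun hap => hap₀ (hap.trans hpp₀)
  · exact hbp₀.trans hp₀p

lemma exists_isMinPrime_le {r : C} (hr : IsPrime r) : ∃ m : C, IsMinPrime m ∧ m ≤ r := by
  obtain ⟨m, hrm, hm⟩ := zorn_le_nonempty₀ (α := Cᵒᵈ) {p | IsPrime (OrderDual.ofDual p)}
    (fun c hcs hc q hq => ⟨OrderDual.toDual (sInf (OrderDual.ofDual '' c)),
      isPrime_sInf_of_isChain (hc.image_of_map_rel _ (· ≥ ·) _ fun _ _ h => h).symm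
        ⟨_, q, hq, rfl⟩ (by rintro _ ⟨p, hp, rfl⟩; exact hcs hp),
      fun p hp => sInf_le ⟨p, hp, rfl⟩⟩) (OrderDual.toDual r) hr
  exact ⟨OrderDual.ofDual m, ⟨hm.1, fun q hq hqm => le_antisymm hqm (hm.2 hq hqm)⟩, hrm⟩

lemma exists_isCompactElement_le_sup_eq_top {a m : C} (h : a ⊔ m = ⊤) :
    ∃ b : C, IsCompactElement b ∧ b ≤ m ∧ a ⊔ b = ⊤ := by
  classical
  obtain ⟨s, hs, rfl⟩ := compactlyGenerated m
  obtain ⟨t, hts, htop⟩ := (isCompactElement_iff_exists_le_sSup_of_le_sSup C ⊤).1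
    top_isCompact (insert a s) (by rw [sSup_insert, h])
  have hmem : ∀ x ∈ t.erase a, x ∈ s := fun x hx =>
    (Finset.mem_erase.1 hx).elim fun hxa hxt => (hts hxt).resolve_left hxa
  refine ⟨(t.erase a).sup id, isCompactElement_finsetSup _ fun x hx => hs x (hmem x hx),
    Finset.sup_le fun x hx => le_sSup (hmem x hx),
    top_le_iff.1 (htop.trans (Finset.sup_le fun x hx => ?_))⟩
  by_cases hxa : x = a
  · exact hxa ▸ le_sup_left
  · exact (Finset.le_sup (f := id) (Finset.mem_erase.2 ⟨hxa, hx⟩)).trans le_sup_right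

lemma mp_iff_forall_isMinPrime_sup_eq_top :
    MP C ↔ ∀ p q : C, IsMinPrime p → IsMinPrime q → p ≠ q → p ⊔ q = ⊤ := by
  refine ⟨fun hmp p q hp hq hpq => sup_eq_top_iff_forall_isPrime.2 fun r hr hpr hqr => ?_,
    fun h r hr => ?_⟩
  · obtain ⟨_, _, huniq⟩ := hmp r hr
    exact hpq ((huniq p ⟨hp, hpr⟩).trans (huniq q ⟨hq, hqr⟩).symm)
  · obtain ⟨m, hm, hmr⟩ := exists_isMinPrime_le hr
    refine ⟨m, ⟨hm, hmr⟩, fun q ⟨hq, hqr⟩ => ?_⟩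
    by_contra hqm
    exact sup_eq_top_iff_forall_isPrime.1 (h q m hq hm hqm) r hr hqr hmr

section FlatTopology

attribute [local instance] flatTop

lemma isTopologicalBasis_flatTop :
    TopologicalSpace.IsTopologicalBasis
      {U | ∃ a : C, IsCompactElement a ∧ U = {p : Spec C | a ≤ p.1}} where
  exists_subset_inter := by
    rintro _ ⟨a, ha, rfl⟩ _ ⟨b, hb, rfl⟩ p hp
    exact ⟨_, ⟨a ⊔ b, ha.sup hb, rfl⟩, sup_le hp.1 hp.2,
      fun q hq => ⟨le_sup_left.trans hq, le_sup_right.trans hq⟩⟩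
  sUnion_eq := Set.eq_univ_of_forall fun p =>
    ⟨_, ⟨⊥, isCompactElement_bot, rfl⟩, bot_le⟩
  eq_generateFrom := rfl

lemma isClosed_flatTop_setOf_le_iff (t : C) :
    IsClosed {q : Spec C | t ≤ q.1} ↔
      ∀ q : Spec C, ¬ t ≤ q.1 → ∃ a : C, IsCompactElement a ∧ a ≤ q.1 ∧ t ⊔ a = ⊤ := by
  rw [← isOpen_compl_iff, isTopologicalBasis_flatTop.isOpen_iff]
  refine forall_congr' fun q => imp_congr_right fun _ => ⟨?_, ?_⟩
  · rintro ⟨_, ⟨a, ha, rfl⟩, haq, hsub⟩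
    exact ⟨a, ha, haq,
      sup_eq_top_iff_forall_isPrime.2 fun p hp htp hap => hsub (a := ⟨p, hp⟩) hap htp⟩
  · rintro ⟨a, ha, haq, hta⟩
    exact ⟨_, ⟨a, ha, rfl⟩, haq,
      fun p hap htp => sup_eq_top_iff_forall_isPrime.1 hta p.1 p.2 htp hap⟩

lemma forall_isMinPrime_sup_eq_top_iff_isClosed :
    (∀ p q : C, IsMinPrime p → IsMinPrime q → p ≠ q → p ⊔ q = ⊤) ↔
      ∀ p : C, IsMinPrime p → IsClosed {q : Spec C | p ≤ q.1} := by
  simp only [isClosed_flatTop_setOf_le_iff]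
  refine ⟨fun h p hp q hpq => ?_, fun h p q hp hq hpq => ?_⟩
  · obtain ⟨m, hm, hmq⟩ := exists_isMinPrime_le q.2
    obtain ⟨a, ha, ham, hpa⟩ :=
      exists_isCompactElement_le_sup_eq_top (h p m hp hm fun hpm => hpq (hpm ▸ hmq))
    exact ⟨a, ha, ham.trans hmq, hpa⟩
  · obtain ⟨a, -, haq, hpa⟩ := h p hp ⟨q, hq.1⟩ fun hpq' => hpq (hq.2 p hp.1 hpq')
    exact top_le_iff.1 (hpa ▸ sup_le_sup_left haq p)

end FlatTopology

theorem statement11 :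
    (MP C ↔ ∀ p q : C, IsMinPrime p → IsMinPrime q → p ≠ q → p ⊔ q = ⊤) ∧
    (MP C ↔ ∀ p : C, IsMinPrime p →
      @IsClosed (Spec C) (flatTop C) {q : Spec C | p ≤ q.1}) :=
  ⟨mp_iff_forall_isMinPrime_sup_eq_top,
    mp_iff_forall_isMinPrime_sup_eq_top.trans forall_isMinPrime_sup_eq_top_iff_isClosed⟩

end CommutatorLattice
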